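/- Let G = (V,A) be a finite simple graph in which every vertex has degree at least 2, n = n(G) = W ⊕ z its graph algebra over a field k of characteristic zero, and δ a nearly coboundary Lie bialgebra structure on n with δ(v) = Σ_{α∈A} D_α(v)∧α + Φ*(v) for v ∈ W, where each D_α is diagonal in the vertex basis: D_α(e_i) = λ_{i,α} e_i. Suppose i₀ = i_N, i₁, …, i_{N−1} are vertices forming a closed path in G, with β_k the edge joining i_k and i_{k+1} for 0 ≤ k ≤ N−1, and let α be an edge of G distinct from all the β_k. Then λ_{i₀,α} = (−1)^N λ_{i₀,α}; in particular, if N is odd then λ_{i₀,α} = 0. -/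

import Mathlib

open TensorProduct

set_option synthInstance.maxHeartbeats 1000000
set_option maxHeartbeats 1000000

/-- The adjoint action of a Lie algebra `g` on `g ⊗ g`, determined by
`x · (a ⊗ b) = ⁅x,a⁆ ⊗ b + a ⊗ ⁅x,b⁆`. -/
noncomputable def tAct (k g : Type*) [CommRing k] [LieRing g] [LieAlgebra k g] (x : g) :
    g ⊗[k] g →ₗ[k] g ⊗[k] g :=
  TensorProduct.map (LieAlgebra.ad k g x) LinearMap.id
    + TensorProduct.map LinearMap.id (LieAlgebra.ad k g x)

/-- The cyclic rotation `(a⊗b)⊗c ↦ (c⊗a)⊗b` on `(g⊗g)⊗g`. -/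
noncomputable def tCyc (k g : Type*) [CommRing k] [AddCommGroup g] [Module k g] :
    (g ⊗[k] g) ⊗[k] g →ₗ[k] (g ⊗[k] g) ⊗[k] g :=
  ((TensorProduct.assoc k g g g).symm.toLinearMap).comp
    (TensorProduct.comm k (g ⊗[k] g) g).toLinearMap

/-- For submodules `P Q ⊆ g`, the image of `P ⊗ Q` in `g ⊗ g`. -/
noncomputable def tsub (k g : Type*) [CommRing k] [AddCommGroup g] [Module k g]
    (P Q : Submodule k g) : Submodule k (g ⊗[k] g) :=
  LinearMap.range (TensorProduct.map P.subtype Q.subtype)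

/-- The degree (valency) of a vertex `e` in the graph with edge set `A` and
endpoint maps `src`, `tgt`. -/
def deg {V A : Type*} [Fintype A] [DecidableEq V] (src tgt : A → V) (e : V) : ℕ :=
  (Finset.univ.filter (fun a : A => src a = e ∨ tgt a = e)).card

/-! For an edge `β` joining `i` and `j`, apply the cocycle condition to `⁅e_i, e_j⁆ = β`.
The left side vanishes because `δ` is nearly coboundary; on the right, the centre `z` kills
`Φ*(e_i), Φ*(e_j) ∈ z ⊗ z` and the `z`-factor of each `e ∧ α`, leaving
`Σ_α (λ_{i,α} + λ_{j,α}) β ∧ α = 0`. Hence `λ_{j,α} = -λ_{i,α}` for every edge `α ≠ β`, and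
going once around the closed path flips the sign of `λ_{i₀,α}` once per edge. -/

section TensorAction

variable {k N : Type*} [CommRing k] [LieRing N] [LieAlgebra k N]

lemma tAct_eq_zero_of_mem_tsub {Z : Submodule k N} (hZ : ∀ x : N, ∀ z ∈ Z, ⁅x, z⁆ = 0) (x : N)
    {p : N ⊗[k] N} (hp : p ∈ tsub k N Z Z) : tAct k N x p = 0 := by
  obtain ⟨t, rfl⟩ := hp
  induction t using TensorProduct.induction_on with
  | zero => simp
  | tmul z₁ z₂ =>
    simp [tAct, LieAlgebra.ad_apply, hZ x _ z₁.2, hZ x _ z₂.2]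
  | add s t hs ht => rw [map_add, map_add, hs, ht, add_zero]

lemma tAct_tmul_sub_tmul_of_lie_eq_zero {x y z : N} (hxz : ⁅x, z⁆ = 0) :
    tAct k N x (y ⊗ₜ z - z ⊗ₜ y) = ⁅x, y⁆ ⊗ₜ z - z ⊗ₜ ⁅x, y⁆ := by
  simp only [tAct, LinearMap.add_apply, map_sub, TensorProduct.map_tmul, LieAlgebra.ad_apply,
    LinearMap.id_apply, hxz, TensorProduct.zero_tmul, TensorProduct.tmul_zero]
  abel

lemma tAct_sum_smul_tmul_sub_tmul_add {Z : Submodule k N} (hZ : ∀ x : N, ∀ z ∈ Z, ⁅x, z⁆ = 0)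
    {ι : Type*} (s : Finset ι) (c : ι → k) {w : ι → N} (hw : ∀ i, w i ∈ Z) (x y : N)
    {p : N ⊗[k] N} (hp : p ∈ tsub k N Z Z) :
    tAct k N x (∑ i ∈ s, c i • (y ⊗ₜ w i - w i ⊗ₜ y) + p)
      = ∑ i ∈ s, c i • (⁅x, y⁆ ⊗ₜ w i - w i ⊗ₜ ⁅x, y⁆) := by
  rw [map_add, tAct_eq_zero_of_mem_tsub hZ x hp, add_zero, map_sum]
  exact Finset.sum_congr rfl fun i _ ↦ by
    rw [map_smul, tAct_tmul_sub_tmul_of_lie_eq_zero (hZ x _ (hw i))]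

end TensorAction

lemma Module.Basis.eq_zero_of_sum_smul_tmul_sub_tmul_eq_zero {k M ι κ : Type*} [CommRing k]
    [AddCommGroup M] [Module k M] [Fintype κ] (b : Module.Basis ι k M) {f : κ → ι}
    (hf : Function.Injective f) (c : κ → k) {i : ι} {j : κ} (hij : i ≠ f j)
    (h : ∑ l, c l • (b i ⊗ₜ[k] b (f l) - b (f l) ⊗ₜ[k] b i) = 0) : c j = 0 := by
  classical
  have hcoeff := congrArg (fun t ↦ (b.tensorProduct b).repr t (i, f j)) h
  simp only [map_sum, map_smul, map_sub, map_zero, Finsupp.coe_finsetSum, Finset.sum_apply,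
    Finsupp.coe_smul, Pi.smul_apply, Finsupp.sub_apply, Finsupp.coe_zero, Pi.zero_apply,
    Module.Basis.tensorProduct_repr_tmul_apply, Module.Basis.repr_self, Finsupp.single_apply,
    if_neg hij, smul_eq_mul] at hcoeff
  simpa [hf.eq_iff] using hcoeff

lemma lam_src_add_lam_tgt_eq_zero {k V A N : Type*} [CommRing k] [Fintype A]
    [LieRing N] [LieAlgebra k N] (src tgt : A → V) (B : Module.Basis (V ⊕ A) k N)
    {Z : Submodule k N} (hZ : ∀ x : N, ∀ z ∈ Z, ⁅x, z⁆ = 0) (hBZ : ∀ a, B (Sum.inr a) ∈ Z)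
    (δ : N →ₗ[k] N ⊗[k] N) (hcoc : ∀ x y, δ ⁅x, y⁆ = tAct k N x (δ y) - tAct k N y (δ x))
    (hδ : ∀ a, δ (B (Sum.inr a)) = 0) (lam : V → A → k) (P : V → N ⊗[k] N)
    (hP : ∀ i : V, P i ∈ tsub k N Z Z)
    (hform : ∀ i : V, δ (B (Sum.inl i))
      = ∑ a : A, lam i a • (B (Sum.inl i) ⊗ₜ[k] B (Sum.inr a)
          - B (Sum.inr a) ⊗ₜ[k] B (Sum.inl i)) + P i)
    {a b : A} (hab : a ≠ b)
    (hb : ⁅B (Sum.inl (src b)), B (Sum.inl (tgt b))⁆ = B (Sum.inr b)) :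
    lam (src b) a + lam (tgt b) a = 0 := by
  have hb' : ⁅B (Sum.inl (tgt b)), B (Sum.inl (src b))⁆ = -B (Sum.inr b) := by
    rw [← lie_skew, hb]
  have hcoc_b := hcoc (B (Sum.inl (src b))) (B (Sum.inl (tgt b)))
  rw [hb, hδ, hform, hform, tAct_sum_smul_tmul_sub_tmul_add hZ _ _ (fun _ ↦ hBZ _) _ _ (hP _),
    tAct_sum_smul_tmul_sub_tmul_add hZ _ _ (fun _ ↦ hBZ _) _ _ (hP _), hb, hb',
    ← Finset.sum_sub_distrib] at hcoc_b
  refine B.eq_zero_of_sum_smul_tmul_sub_tmul_eq_zero Sum.inr_injective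
    (fun a' ↦ lam (src b) a' + lam (tgt b) a') (i := Sum.inr b)
    (Sum.inr_injective.ne hab.symm) ?_
  rw [hcoc_b]
  refine Finset.sum_congr rfl fun a' _ ↦ ?_
  simp only [TensorProduct.neg_tmul, TensorProduct.tmul_neg, sub_neg_eq_add, add_smul]
  module

lemma eq_neg_one_pow_mul_of_forall_lt_succ_eq_neg {R : Type*} [Ring R] {f : ℕ → R} {M : ℕ}
    (h : ∀ m < M, f (m + 1) = -f m) : f M = (-1) ^ M * f 0 := by
  induction M with
  | zero => simp
  | succ n ih =>
    rw [h n n.lt_succ_self, ih fun m hm ↦ h m (hm.trans n.lt_succ_self), pow_succ]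
    noncomm_ring

theorem stmt17_general (k V A N : Type*) [Field k] [CharZero k]
    [Fintype A]
    [LieRing N] [LieAlgebra k N]
    (src tgt : A → V)
    (B : Module.Basis (V ⊕ A) k N)
    (hbz : ∀ (a : A) (x : N), ⁅B (Sum.inr a), x⁆ = 0)
    (hbe : ∀ a : A, ⁅B (Sum.inl (src a)), B (Sum.inl (tgt a))⁆ = B (Sum.inr a))
    (Z : Submodule k N)
    (hZ : Z = Submodule.span k (Set.range fun a : A => B (Sum.inr a)))
    -- δ is a Lie bialgebra structure on n:
    (δ : N →ₗ[k] N ⊗[k] N)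
    (hcoc : ∀ x y, δ ⁅x, y⁆ = tAct k N x (δ y) - tAct k N y (δ x))
    -- δ is nearly coboundary:
    (hnc : ∀ z ∈ Z, δ z = 0)
    -- δ on W has the form δ(e_i) = Σ_α λ_{i,α} e_i∧α + Φ*(e_i) (diagonal D_α's):
    (lam : V → A → k)
    (P : V → N ⊗[k] N)
    (hP : ∀ i : V, P i ∈ tsub k N Z Z)
    (hform : ∀ i : V, δ (B (Sum.inl i))
      = ∑ a : A, lam i a • (B (Sum.inl i) ⊗ₜ[k] B (Sum.inr a)
          - B (Sum.inr a) ⊗ₜ[k] B (Sum.inl i)) + P i)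
    -- a closed path i₀ = i_M, i₁, …, i_{M−1} with edges β_m joining i_m and i_{m+1}:
    (M : ℕ) (vs : ℕ → V) (hcl : vs M = vs 0)
    (β : ℕ → A)
    (hpath : ∀ m < M, (src (β m) = vs m ∧ tgt (β m) = vs (m + 1))
      ∨ (src (β m) = vs (m + 1) ∧ tgt (β m) = vs m))
    -- an edge α distinct from all the β_m:
    (α : A) (hα : ∀ m < M, α ≠ β m) :
    lam (vs 0) α = (-1 : k) ^ M * lam (vs 0) α
    ∧ (Odd M → lam (vs 0) α = 0) := by
  have hBZ : ∀ a, B (Sum.inr a) ∈ Z := fun a ↦ hZ ▸ Submodule.subset_span ⟨a, rfl⟩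
  have hZc : ∀ x : N, ∀ z ∈ Z, ⁅x, z⁆ = 0 := by
    have hZcenter : Z ≤ (LieAlgebra.center k N).toSubmodule := hZ ▸ Submodule.span_le.mpr
      (by rintro _ ⟨a, rfl⟩; exact fun x ↦ by rw [← lie_skew, hbz, neg_zero])
    exact fun x z hz ↦ hZcenter hz x
  have hstep : ∀ m < M, lam (vs (m + 1)) α = -lam (vs m) α := by
    intro m hm
    have h := lam_src_add_lam_tgt_eq_zero src tgt B hZc hBZ δ hcoc (fun a ↦ hnc _ (hBZ a))
      lam P hP hform (hα m hm) (hbe (β m))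
    rcases hpath m hm with ⟨hs, ht⟩ | ⟨hs, ht⟩ <;> rw [hs, ht] at h <;> linear_combination h
  have hcycle : lam (vs 0) α = (-1 : k) ^ M * lam (vs 0) α := by
    simpa only [hcl] using
      eq_neg_one_pow_mul_of_forall_lt_succ_eq_neg (f := fun m ↦ lam (vs m) α) hstep
  refine ⟨hcycle, fun hodd ↦ ?_⟩
  rw [hodd.neg_one_pow, neg_one_mul] at hcycle
  exact self_eq_neg.mp hcycle

/-- let `G` be a finite simple graph in which every vertex has degree at
least 2, `n = n(G) = W ⊕ z` its graph algebra, and `δ` a nearly coboundary Lie bialgebra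
structure with diagonal `D_α`'s (`D_α(e_i) = λ_{i,α} e_i`).  If `i₀ = i_M, i₁, …, i_{M−1}`
is a closed path in `G`, with `β_m` the edge joining `i_m` and `i_{m+1}`, and `α` is an
edge distinct from all the `β_m`, then `λ_{i₀,α} = (−1)^M λ_{i₀,α}`; in particular if
`M` is odd then `λ_{i₀,α} = 0`. -/
theorem stmt17 (k V A N : Type*) [Field k] [CharZero k]
    [Fintype V] [Fintype A] [DecidableEq V] [DecidableEq A]
    [LieRing N] [LieAlgebra k N]
    (src tgt : A → V)
    (hloop : ∀ a, src a ≠ tgt a)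
    (hsimple : ∀ a b : A,
      (src a = src b ∧ tgt a = tgt b) ∨ (src a = tgt b ∧ tgt a = src b) → a = b)
    (B : Module.Basis (V ⊕ A) k N)
    (hbz : ∀ (a : A) (x : N), ⁅B (Sum.inr a), x⁆ = 0)
    (hbe : ∀ a : A, ⁅B (Sum.inl (src a)), B (Sum.inl (tgt a))⁆ = B (Sum.inr a))
    (hbe0 : ∀ i j : V,
      (∀ a : A, ¬((src a = i ∧ tgt a = j) ∨ (src a = j ∧ tgt a = i))) →
      ⁅B (Sum.inl i), B (Sum.inl j)⁆ = 0)
    (hdeg : ∀ e : V, 2 ≤ deg src tgt e)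
    (Z : Submodule k N)
    (hZ : Z = Submodule.span k (Set.range fun a : A => B (Sum.inr a)))
    -- δ is a Lie bialgebra structure on n:
    (δ : N →ₗ[k] N ⊗[k] N)
    (hanti : ∀ x, TensorProduct.comm k N N (δ x) = - δ x)
    (hcoJ : ∀ x, (TensorProduct.map δ LinearMap.id) (δ x)
        + tCyc k N ((TensorProduct.map δ LinearMap.id) (δ x))
        + tCyc k N (tCyc k N ((TensorProduct.map δ LinearMap.id) (δ x))) = 0)
    (hcoc : ∀ x y, δ ⁅x, y⁆ = tAct k N x (δ y) - tAct k N y (δ x))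
    -- δ is nearly coboundary:
    (hnc : ∀ z ∈ Z, δ z = 0)
    -- δ on W has the form δ(e_i) = Σ_α λ_{i,α} e_i∧α + Φ*(e_i) (diagonal D_α's):
    (lam : V → A → k)
    (P : V → N ⊗[k] N)
    (hP : ∀ i : V, P i ∈ tsub k N Z Z)
    (hform : ∀ i : V, δ (B (Sum.inl i))
      = ∑ a : A, lam i a • (B (Sum.inl i) ⊗ₜ[k] B (Sum.inr a)
          - B (Sum.inr a) ⊗ₜ[k] B (Sum.inl i)) + P i)
    -- a closed path i₀ = i_M, i₁, …, i_{M−1} with edges β_m joining i_m and i_{m+1}: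
    (M : ℕ) (vs : ℕ → V) (hcl : vs M = vs 0)
    (β : ℕ → A)
    (hpath : ∀ m < M, (src (β m) = vs m ∧ tgt (β m) = vs (m + 1))
      ∨ (src (β m) = vs (m + 1) ∧ tgt (β m) = vs m))
    -- an edge α distinct from all the β_m:
    (α : A) (hα : ∀ m < M, α ≠ β m) :
    lam (vs 0) α = (-1 : k) ^ M * lam (vs 0) α
    ∧ (Odd M → lam (vs 0) α = 0) :=
  stmt17_general k V A N src tgt B hbz hbe Z hZ δ hcoc hnc lam P hP hform M vs hcl β hpath α hα
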